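/- There exists a constant C > 0 such that for every real k ≥ 2, ∫_{k^{1/3}}^{k − k^{4/9}} 1/η(k,ν) dν ≤ C·k^{5/18}·log k. -/

import Mathlib

/-!
Since `∂η/∂ν = -arccos (ν/k)` and `η(k,k) = 0`, the elementary bound `arccos x ≥ √(1 - x)`
integrates to `η(k,ν) ≥ (2/3) (k - ν)^{3/2} / √k`. Hence `1/η(k,ν) ≤ (3/2) √k (k - ν)^{-3/2}`,
whose integral up to `b = k - k^{4/9}` is at most `3 √k (k - b)^{-1/2} = 3 k^{5/18}`; the factor
`log k` is then only needed to absorb the constant.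
-/

open Real

/-- The phase function `η(k,ν) = √(k²-ν²) - ν·arccos(ν/k)`. -/
noncomputable def eta (k ν : ℝ) : ℝ :=
  Real.sqrt (k ^ 2 - ν ^ 2) - ν * Real.arccos (ν / k)

open Set

lemma sqrt_one_sub_le_arccos {x : ℝ} (h₁ : -1 ≤ x) (h₂ : x ≤ 1) : √(1 - x) ≤ arccos x := by
  have hcos : 1 - arccos x ^ 2 / 2 ≤ x := by
    simpa only [cos_arccos h₁ h₂] using one_sub_sq_div_two_le_cos (x := arccos x)
  rw [← sqrt_sq (arccos_nonneg x)]
  exact sqrt_le_sqrt (by nlinarith [sq_nonneg (arccos x)])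

lemma continuous_eta (k : ℝ) : Continuous (eta k) := by
  unfold eta
  fun_prop

lemma eta_self {k : ℝ} (hk : k ≠ 0) : eta k k = 0 := by
  simp [eta, div_self hk]

lemma hasDerivAt_eta {k ν : ℝ} (hk : 0 < k) (hν : |ν| < k) :
    HasDerivAt (eta k) (-arccos (ν / k)) ν := by
  obtain ⟨hlo, hhi⟩ := abs_lt.mp hν
  have hsqrt : √(k ^ 2 - ν ^ 2) = k * √(1 - (ν / k) ^ 2) := by
    rw [← sqrt_sq hk.le, ← sqrt_mul (sq_nonneg k), sqrt_sq hk.le]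
    congr 1
    field_simp
  have hroot : HasDerivAt (fun s => √(k ^ 2 - s ^ 2)) (-(2 * ν) / (2 * √(k ^ 2 - ν ^ 2))) ν := by
    convert ((hasDerivAt_pow 2 ν).const_sub (k ^ 2)).sqrt (by nlinarith) using 1
    norm_num
  have harccos : HasDerivAt (fun s => arccos (s / k)) (-(1 / √(1 - (ν / k) ^ 2)) * (1 / k)) ν :=
    (hasDerivAt_arccos (by rw [Ne, div_eq_iff hk.ne']; linarith)
      (by rw [Ne, div_eq_iff hk.ne']; linarith)).comp ν ((hasDerivAt_id ν).div_const k)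
  refine (hroot.sub ((hasDerivAt_id' ν).mul harccos)).congr_deriv ?_
  have hq : 0 < √(1 - (ν / k) ^ 2) := by
    apply sqrt_pos.mpr
    rw [sub_pos, sq_lt_one_iff_abs_lt_one, abs_div, abs_of_pos hk, div_lt_one hk]
    exact hν
  rw [hsqrt]
  field_simp
  ring

lemma eta_lower_bound {k ν : ℝ} (hk : 0 < k) (hν : ν ∈ Icc (-k) k) :
    2 / 3 * (k - ν) ^ ((3 : ℝ) / 2) / √k ≤ eta k ν := by
  set g : ℝ → ℝ := fun s => eta k s - 2 / 3 * (k - s) ^ ((3 : ℝ) / 2) / √k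
  suffices AntitoneOn g (Icc (-k) k) by
    have := this hν ⟨by linarith, le_rfl⟩ hν.2
    norm_num [g, eta_self hk.ne'] at this
    linarith
  have hg : ∀ s ∈ Ioo (-k) k, HasDerivAt g (-arccos (s / k) + √(k - s) / √k) s := by
    intro s hs
    have hpow := ((hasDerivAt_id s).const_sub k).rpow_const (p := 3 / 2) (Or.inr (by norm_num))
    refine ((hasDerivAt_eta hk (abs_lt.mpr hs)).sub
      ((hpow.const_mul (2 / 3)).div_const √k)).congr_deriv ?_
    rw [sqrt_eq_rpow (k - s)]
    norm_num
    ring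
  refine antitoneOn_of_hasDerivWithinAt_nonpos (convex_Icc _ _) ?_
    (fun s hs => (hg s (by rwa [interior_Icc] at hs)).hasDerivWithinAt) ?_
  · exact ((continuous_eta k).sub (((continuous_const.sub continuous_id).rpow_const
      fun _ => Or.inr (by norm_num)).const_mul _ |>.div_const _)).continuousOn
  · intro s hs
    rw [interior_Icc] at hs
    rw [← sqrt_div' _ hk.le, sub_div, div_self hk.ne', neg_add_nonpos_iff]
    have h₁ : -1 ≤ s / k := by rw [le_div_iff₀ hk]; linarith [hs.1]
    exact sqrt_one_sub_le_arccos h₁ ((div_le_one hk).mpr hs.2.le)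

lemma eta_pos {k ν : ℝ} (hk : 0 < k) (hν : ν ∈ Ico (-k) k) : 0 < eta k ν := by
  have : 0 < k - ν := by linarith [hν.2]
  exact lt_of_lt_of_le (by positivity) (eta_lower_bound hk (Ico_subset_Icc_self hν))

lemma one_div_eta_le {k ν : ℝ} (hk : 0 < k) (hν : ν ∈ Ico (-k) k) :
    1 / eta k ν ≤ 3 / 2 * √k * (k - ν) ^ (-(3 : ℝ) / 2) := by
  have hkν : 0 < k - ν := by linarith [hν.2]
  calc 1 / eta k ν ≤ 1 / (2 / 3 * (k - ν) ^ ((3 : ℝ) / 2) / √k) :=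
        one_div_le_one_div_of_le (by positivity) (eta_lower_bound hk (Ico_subset_Icc_self hν))
    _ = 3 / 2 * √k * (k - ν) ^ (-(3 : ℝ) / 2) := by
        rw [neg_div, rpow_neg hkν.le]
        field_simp

lemma integral_one_div_eta_le {k a b : ℝ} (hk : 0 < k) (ha : a ∈ Ico (-k) k)
    (hb : b ∈ Ico (-k) k) :
    ∫ ν in a..b, 1 / eta k ν ≤ 3 * √k * (k - b) ^ (-(1 : ℝ) / 2) := by
  have hsub : uIcc a b ⊆ Ico (-k) k := ordConnected_Ico.uIcc_subset ha hb
  have hne : ∀ ν ∈ uIcc a b, k - ν ≠ 0 := fun ν hν => sub_ne_zero.mpr (hsub hν).2.ne'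
  rcases le_or_gt a b with hab | hba
  · have hmajorant : ContinuousOn (fun ν => 3 / 2 * √k * (k - ν) ^ (-(3 : ℝ) / 2)) (uIcc a b) :=
      ((continuousOn_const.sub continuousOn_id).rpow_const fun ν hν =>
        Or.inl (hne ν hν)).const_mul _
    have hprimitive : ∀ ν ∈ uIcc a b, HasDerivAt (fun s => 3 * √k * (k - s) ^ (-(1 : ℝ) / 2))
        (3 / 2 * √k * (k - ν) ^ (-(3 : ℝ) / 2)) ν := fun ν hν => by
      refine ((((hasDerivAt_id ν).const_sub k).rpow_const
        (Or.inl (hne ν hν))).const_mul _).congr_deriv ?_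
      norm_num
      ring
    calc ∫ ν in a..b, 1 / eta k ν
        ≤ ∫ ν in a..b, 3 / 2 * √k * (k - ν) ^ (-(3 : ℝ) / 2) := by
          refine intervalIntegral.integral_mono_on hab ?_ hmajorant.intervalIntegrable
            fun ν hν => one_div_eta_le hk (hsub (Icc_subset_uIcc hν))
          exact (continuousOn_const.div (continuous_eta k).continuousOn fun ν hν =>
            (eta_pos hk (hsub hν)).ne').intervalIntegrable
      _ = 3 * √k * (k - b) ^ (-(1 : ℝ) / 2) - 3 * √k * (k - a) ^ (-(1 : ℝ) / 2) :=
          intervalIntegral.integral_eq_sub_of_hasDerivAt hprimitive hmajorant.intervalIntegrable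
      _ ≤ 3 * √k * (k - b) ^ (-(1 : ℝ) / 2) := by
          have : 0 < k - a := by linarith [ha.2]
          exact sub_le_self _ (by positivity)
  · have : 0 < k - b := by linarith [hb.2]
    rw [intervalIntegral.integral_symm]
    refine (neg_nonpos.mpr ?_).trans (by positivity)
    exact intervalIntegral.integral_nonneg hba.le fun ν hν =>
      (one_div_pos.mpr (eta_pos hk (hsub (Icc_subset_uIcc' hν)))).le

/-- `∫_{k^{1/3}}^{k-k^{4/9}} dν/η(k,ν) = O(k^{5/18} log k)`. -/
theorem integral_inv_eta_bound :
    ∃ C > (0 : ℝ), ∀ k : ℝ, 2 ≤ k →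
      (∫ ν in (k ^ ((1 : ℝ) / 3))..(k - k ^ ((4 : ℝ) / 9)), 1 / eta k ν)
        ≤ C * k ^ ((5 : ℝ) / 18) * Real.log k := by
  refine ⟨5, by norm_num, fun k hk => ?_⟩
  have hk0 : 0 < k := by linarith
  have hk1 : 1 < k := by linarith
  have hlower : k ^ ((1 : ℝ) / 3) ∈ Ico (-k) k :=
    ⟨by linarith [rpow_pos_of_pos hk0 ((1 : ℝ) / 3)], rpow_lt_self_of_one_lt hk1 (by norm_num)⟩
  have hupper : k - k ^ ((4 : ℝ) / 9) ∈ Ico (-k) k :=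
    ⟨by linarith [rpow_lt_self_of_one_lt hk1 (show (4 : ℝ) / 9 < 1 by norm_num)],
      by linarith [rpow_pos_of_pos hk0 ((4 : ℝ) / 9)]⟩
  calc (∫ ν in (k ^ ((1 : ℝ) / 3))..(k - k ^ ((4 : ℝ) / 9)), 1 / eta k ν)
      ≤ 3 * √k * (k - (k - k ^ ((4 : ℝ) / 9))) ^ (-(1 : ℝ) / 2) :=
        integral_one_div_eta_le hk0 hlower hupper
    _ = 3 * k ^ ((5 : ℝ) / 18) := by
        rw [sub_sub_cancel, ← rpow_mul hk0.le, sqrt_eq_rpow, mul_assoc, ← rpow_add hk0]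
        norm_num
    _ ≤ 5 * k ^ ((5 : ℝ) / 18) * Real.log k := by
        have hlog : log 2 ≤ log k := log_le_log two_pos hk
        nlinarith [log_two_gt_d9, rpow_pos_of_pos hk0 ((5 : ℝ) / 18)]
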